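/- arXiv:1112.3244 — 4 statements merged into one kernel-verified Lean document; each statement's English description precedes it below -/
import Mathlib

section
/- For every k ≥ 0 there exists a graph on 2(k+1) vertices with a multiple interval representation using exactly 2(k+1) + k intervals (i.e., k gaps) that has exactly 2^{k+1} maximal cliques. Concretely, the graph with vertex set {a_0,…,a_k, b_0,…,b_k} in which every pair of distinct vertices is adjacent except the pairs {a_i, b_i} for 0 ≤ i ≤ k has exactly 2^{k+1} maximal cliques. -/
/-- `f` is a multiple interval representation of `G`: each vertex gets a nonempty
finite collection of closed real intervals (given by pairs of endpoints), and two
distinct vertices are adjacent iff some interval of one meets some interval of the other. -/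
def IsMultiIntervalRep {V : Type*} (G : SimpleGraph V) (f : V → Finset (ℝ × ℝ)) : Prop :=
  (∀ v, (f v).Nonempty) ∧ (∀ v, ∀ p ∈ f v, p.1 ≤ p.2) ∧
    ∀ u v, u ≠ v →
      (G.Adj u v ↔ ∃ p ∈ f u, ∃ q ∈ f v,
        (Set.Icc p.1 p.2 ∩ Set.Icc q.1 q.2).Nonempty)

/-- The cocktail-party graph: vertices `(i, b)` with `a_i = (i, false)`, `b_i = (i, true)`;
every pair of distinct vertices adjacent except `a_i, b_i`. -/
def cocktail (k : ℕ) : SimpleGraph (Fin (k + 1) × Bool) :=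
  SimpleGraph.fromRel (fun u v => u.1 ≠ v.1)


lemma cocktail_adj (k : ℕ) (u v : Fin (k+1) × Bool) :
    (cocktail k).Adj u v ↔ u ≠ v ∧ u.1 ≠ v.1 := by
  simp only [cocktail, SimpleGraph.fromRel_adj]; tauto

noncomputable def rep (k : ℕ) : Fin (k + 1) × Bool → Finset (ℝ × ℝ)
  | (i, false) => {((i : ℝ), (i : ℝ) + (k + 1))}
  | (i, true) =>
      if (i : ℕ) = k then {(-10, (i : ℝ) - 1/2)}
      else {(-10, (i : ℝ) - 1/2), ((k : ℝ) + (i : ℝ) + 3/2, 3 * (k : ℝ) + 10)}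

lemma mem_rep_true (k : ℕ) (i : Fin (k+1)) (p : ℝ × ℝ) (hp : p ∈ rep k (i, true)) :
    p = (-10, (i : ℝ) - 1/2) ∨ ((i : ℕ) ≠ k ∧ p = ((k : ℝ) + (i : ℝ) + 3/2, 3 * (k : ℝ) + 10)) := by
  by_cases h : (i : ℕ) = k
  · simp only [rep, if_pos h, Finset.mem_singleton] at hp
    exact Or.inl hp
  · simp only [rep, if_neg h, Finset.mem_insert, Finset.mem_singleton] at hp
    rcases hp with rfl | rfl
    · exact Or.inl rfl
    · exact Or.inr ⟨h, rfl⟩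

lemma memL_rep (k : ℕ) (m : Fin (k+1)) : (-10, (m : ℝ) - 1/2) ∈ rep k (m, true) := by
  by_cases h : (m : ℕ) = k <;> simp [rep, h]

lemma memR_rep (k : ℕ) (m : Fin (k+1)) (h : (m : ℕ) ≠ k) :
    ((k : ℝ) + (m : ℝ) + 3/2, 3 * (k : ℝ) + 10) ∈ rep k (m, true) := by
  simp [rep, h]

lemma rep_isRep (k : ℕ) : IsMultiIntervalRep (cocktail k) (rep k) := by
  refine ⟨?_, ?_, ?_⟩
  · rintro ⟨i, s⟩
    rcases s
    · simp [rep]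
    · exact ⟨_, memL_rep k i⟩
  · rintro ⟨i, s⟩ p hp
    have hik : (i : ℝ) ≤ k := by exact_mod_cast Nat.lt_succ_iff.mp i.isLt
    have h0 : (0:ℝ) ≤ i := by positivity
    rcases s
    · simp [rep] at hp; subst hp; simp; linarith
    · rcases mem_rep_true k i p hp with rfl | ⟨-, rfl⟩ <;> simp <;> linarith
  · rintro ⟨i, s⟩ ⟨j, t⟩ huv
    rw [cocktail_adj]
    have hik : (i : ℝ) ≤ k := by exact_mod_cast Nat.lt_succ_iff.mp i.isLt
    have hjk : (j : ℝ) ≤ k := by exact_mod_cast Nat.lt_succ_iff.mp j.isLt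
    have h0i : (0:ℝ) ≤ i := by positivity
    have h0j : (0:ℝ) ≤ j := by positivity
    constructor
    · rintro ⟨-, hij⟩
      have hij' : (i : ℕ) ≠ (j : ℕ) := fun h => hij (by simp only at *; exact Fin.val_injective h)
      rcases s <;> rcases t
      · -- a_i, a_j: common point max i j
        refine ⟨((i : ℝ), (i : ℝ) + (k + 1)), by simp [rep],
               ((j : ℝ), (j : ℝ) + (k + 1)), by simp [rep], max (i:ℝ) (j:ℝ), ?_⟩
        simp only [Set.mem_inter_iff, Set.mem_Icc, le_max_iff, max_le_iff]
        refine ⟨⟨Or.inl le_rfl, by linarith, by linarith⟩,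
                ⟨Or.inr le_rfl, by linarith, by linarith⟩⟩
      · -- a_i, b_j
        rcases Nat.lt_or_ge (i : ℕ) (j : ℕ) with hlt | hge
        · have : (i:ℝ) + 1 ≤ j := by exact_mod_cast hlt
          refine ⟨((i : ℝ), (i : ℝ) + (k + 1)), by simp [rep], _, memL_rep k j, (i:ℝ), ?_⟩
          simp only [Set.mem_inter_iff, Set.mem_Icc]
          refine ⟨⟨le_rfl, by linarith⟩, by linarith, by linarith⟩
        · have hlt : (j : ℕ) < (i : ℕ) := lt_of_le_of_ne hge (Ne.symm hij')
          have hjki : (j : ℕ) ≠ k := by omega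
          have : (j:ℝ) + 1 ≤ i := by exact_mod_cast hlt
          refine ⟨((i : ℝ), (i : ℝ) + (k + 1)), by simp [rep], _, memR_rep k j hjki,
                 (k:ℝ) + (j:ℝ) + 3/2, ?_⟩
          simp only [Set.mem_inter_iff, Set.mem_Icc]
          refine ⟨⟨by linarith, by linarith⟩, le_rfl, by linarith⟩
      · -- b_i, a_j
        rcases Nat.lt_or_ge (j : ℕ) (i : ℕ) with hlt | hge
        · have : (j:ℝ) + 1 ≤ i := by exact_mod_cast hlt
          refine ⟨_, memL_rep k i, ((j : ℝ), (j : ℝ) + (k + 1)), by simp [rep], (j:ℝ), ?_⟩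
          simp only [Set.mem_inter_iff, Set.mem_Icc]
          refine ⟨⟨by linarith, by linarith⟩, le_rfl, by linarith⟩
        · have hlt : (i : ℕ) < (j : ℕ) := lt_of_le_of_ne hge hij'
          have hiki : (i : ℕ) ≠ k := by omega
          have : (i:ℝ) + 1 ≤ j := by exact_mod_cast hlt
          refine ⟨_, memR_rep k i hiki, ((j : ℝ), (j : ℝ) + (k + 1)), by simp [rep],
                 (k:ℝ) + (i:ℝ) + 3/2, ?_⟩
          simp only [Set.mem_inter_iff, Set.mem_Icc]
          refine ⟨⟨le_rfl, by linarith⟩, by linarith, by linarith⟩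
      · -- b_i, b_j: common point -10
        refine ⟨_, memL_rep k i, _, memL_rep k j, -10, ?_⟩
        simp only [Set.mem_inter_iff, Set.mem_Icc]
        refine ⟨⟨le_rfl, by linarith⟩, le_rfl, by linarith⟩
    · rintro ⟨p, hp, q, hq, x, ⟨hx1, hx2⟩, hx3, hx4⟩
      refine ⟨huv, fun hij => ?_⟩
      simp only at hij
      subst hij
      have hst : s ≠ t := fun h => huv (by simp [h])
      have key : ∀ p q : ℝ × ℝ, p ∈ rep k (i, false) → q ∈ rep k (i, true) →
          ∀ y : ℝ, p.1 ≤ y → y ≤ p.2 → q.1 ≤ y → y ≤ q.2 → False := by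
        intro p q hp hq y h1 h2 h3 h4
        simp [rep] at hp
        subst hp
        rcases mem_rep_true k i q hq with rfl | ⟨-, rfl⟩
        · simp only at h1 h2 h3 h4; linarith
        · simp only at h1 h2 h3 h4; linarith
      rcases s
      · rcases t
        · exact hst rfl
        · exact key p q hp hq x hx1 hx2 hx3 hx4
      · rcases t
        · exact key q p hq hp x hx3 hx4 hx1 hx2
        · exact hst rfl

lemma rep_card (k : ℕ) : ∑ v : Fin (k + 1) × Bool, ((rep k) v).card = 2 * (k + 1) + k := by
  rw [Fintype.sum_prod_type]
  have key : ∀ i : Fin (k+1), ∑ s : Bool, ((rep k) (i, s)).card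
      = 1 + (if i = Fin.last k then 1 else 2) := by
    intro i
    rw [Fintype.sum_bool]
    have h1 : ((rep k) (i, false)).card = 1 := by simp [rep]
    have h2 : ((rep k) (i, true)).card = if i = Fin.last k then 1 else 2 := by
      by_cases h : (i : ℕ) = k
      · rw [if_pos (by simpa [Fin.ext_iff] using h)]
        simp [rep, h]
      · rw [if_neg (by simpa [Fin.ext_iff] using h)]
        simp only [rep, if_neg h]
        rw [Finset.card_insert_of_notMem, Finset.card_singleton]
        simp only [Finset.mem_singleton, Prod.mk.injEq, not_and]
        intro habs
        exfalso
        have h0 : (0:ℝ) ≤ i := by positivity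
        have : (0:ℝ) ≤ k := by positivity
        linarith
    rw [h1, h2]; ring
  rw [Finset.sum_congr rfl (fun i _ => key i), Finset.sum_add_distrib]
  have : ∑ x : Fin (k+1), (if x = Fin.last k then 1 else 2) = 2 * (k + 1) - 1 := by
    simp [Finset.sum_ite, Finset.filter_eq', Finset.filter_ne']
    omega
  rw [this]
  simp
  omega

lemma maximal_clique_iff (k : ℕ) (S : Set (Fin (k+1) × Bool)) :
    Maximal (cocktail k).IsClique S ↔ ∃ g : Fin (k+1) → Bool, S = {p | p.2 = g p.1} := by
  constructor
  · rintro ⟨hcl, hmax⟩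
    have hex : ∀ i : Fin (k+1), ∃ s, (i, s) ∈ S := by
      intro i
      by_contra h
      push_neg at h
      have hcl' : (cocktail k).IsClique (insert (i, false) S) := by
        rintro ⟨a, s⟩ ha ⟨b, t⟩ hb hne
        rw [cocktail_adj]
        refine ⟨hne, fun h1 => ?_⟩
        simp only at h1
        subst h1
        rcases ha with ha | ha <;> rcases hb with hb | hb
        · exact hne (ha.trans hb.symm)
        · rw [Prod.mk.injEq] at ha
          exact h t (ha.1 ▸ hb)
        · rw [Prod.mk.injEq] at hb
          exact h s (hb.1 ▸ ha)
        · have := hcl ha hb hne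
          rw [cocktail_adj] at this
          exact this.2 rfl
      have := hmax hcl' (Set.subset_insert _ _)
      exact h false (this (Set.mem_insert _ _))
    have huniq : ∀ i s t, (i, s) ∈ S → (i, t) ∈ S → s = t := by
      intro i s t hs ht
      by_contra h
      have := hcl hs ht (by simp [h])
      rw [cocktail_adj] at this
      exact this.2 rfl
    choose g hg using hex
    refine ⟨g, Set.Subset.antisymm ?_ ?_⟩
    · rintro ⟨i, s⟩ hs
      exact huniq i s (g i) hs (hg i)
    · rintro ⟨i, s⟩ hs
      simp only [Set.mem_setOf_eq] at hs
      exact hs ▸ hg i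
  · rintro ⟨g, rfl⟩
    constructor
    · rintro ⟨i, s⟩ hi ⟨j, t⟩ hj hne
      simp only [Set.mem_setOf_eq] at hi hj
      rw [cocktail_adj]
      refine ⟨hne, ?_⟩
      intro h
      simp only at h
      subst h
      exact hne (by simp [hi, hj])
    · intro T hT hST
      rintro ⟨i, s⟩ hi
      simp only [Set.mem_setOf_eq]
      by_contra h
      have h1 : ((i, g i) : Fin (k+1) × Bool) ∈ T := hST (by simp)
      have := hT hi h1 (by simp; exact fun _ => h (by tauto))
      rw [cocktail_adj] at this
      exact this.2 rfl


/-- For every k there is a graph on 2(k+1) vertices having a multiple interval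
representation with exactly 2(k+1)+k intervals (k gaps) and exactly 2^{k+1}
maximal cliques; concretely, the cocktail party graph. -/
theorem stmt3 (k : ℕ) :
    (∃ f : Fin (k + 1) × Bool → Finset (ℝ × ℝ),
      IsMultiIntervalRep (cocktail k) f ∧
      ∑ v : Fin (k + 1) × Bool, (f v).card = 2 * (k + 1) + k) ∧
    {S : Set (Fin (k + 1) × Bool) | Maximal (cocktail k).IsClique S}.ncard = 2 ^ (k + 1) := by
  constructor
  · exact ⟨rep k, rep_isRep k, rep_card k⟩
  · have h : {S : Set (Fin (k + 1) × Bool) | Maximal (cocktail k).IsClique S}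
        = Set.range (fun g : Fin (k+1) → Bool => {p : Fin (k+1) × Bool | p.2 = g p.1}) := by
      ext S
      simp only [Set.mem_setOf_eq, Set.mem_range, maximal_clique_iff]
      constructor <;> rintro ⟨g, hg⟩ <;> exact ⟨g, hg.symm⟩
    rw [h, ← Nat.card_coe_set_eq, Nat.card_range_of_injective]
    · simp
    · intro g g' hgg
      funext i
      have hm : ((i, g i) : Fin (k+1) × Bool) ∈ {p : Fin (k+1) × Bool | p.2 = g' p.1} := by
        simp only at hgg; rw [← hgg]; simp
      simpa using hm
end

section
/- A graph G is a k-gap interval graph (i.e., has a multiple interval representation with at most |V(G)| + k intervals in total) if and only if G can be obtained from an interval graph by a sequence of at most k operations of identifying pairs of vertices. -/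
def IsIntervalGraph {V : Type*} (G : SimpleGraph V) : Prop :=
  ∃ l r : V → ℝ, (∀ v, l v ≤ r v) ∧
    ∀ u v, u ≠ v → (G.Adj u v ↔ (Set.Icc (l u) (r u) ∩ Set.Icc (l v) (r v)).Nonempty)

/-!
Splitting each vertex into one new vertex per interval turns a multiple interval
representation with `N` intervals into an interval graph on `N` vertices that maps onto `G`
by identifying the copies of each vertex; conversely, the fibres of such a map give each
vertex of `G` the intervals of its preimages, at most `N` in total.
-/

open Finset

def intervalIntersectionGraph {W : Type*} (I : W → ℝ × ℝ) : SimpleGraph W where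
  Adj a b := a ≠ b ∧ (Set.Icc (I a).1 (I a).2 ∩ Set.Icc (I b).1 (I b).2).Nonempty
  symm := ⟨fun _ _ h => ⟨h.1.symm, Set.inter_comm _ _ ▸ h.2⟩⟩
  loopless := ⟨fun _ h => h.1 rfl⟩

@[simp]
theorem intervalIntersectionGraph_adj {W : Type*} (I : W → ℝ × ℝ) (a b : W) :
    (intervalIntersectionGraph I).Adj a b ↔
      a ≠ b ∧ (Set.Icc (I a).1 (I a).2 ∩ Set.Icc (I b).1 (I b).2).Nonempty :=
  Iff.rfl

theorem isIntervalGraph_iff_exists_eq_intervalIntersectionGraph {W : Type*}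
    (H : SimpleGraph W) :
    IsIntervalGraph H ↔
      ∃ I : W → ℝ × ℝ, (∀ w, (I w).1 ≤ (I w).2) ∧ H = intervalIntersectionGraph I := by
  constructor
  · rintro ⟨l, r, hlr, hadj⟩
    refine ⟨fun w => (l w, r w), hlr, ?_⟩
    ext a b
    rw [intervalIntersectionGraph_adj]
    exact ⟨fun h => ⟨h.ne, (hadj a b h.ne).1 h⟩, fun h => (hadj a b h.1).2 h.2⟩
  · rintro ⟨I, hI, rfl⟩
    exact ⟨fun w => (I w).1, fun w => (I w).2, hI, fun a b hab => by simp [hab]⟩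

theorem isMultiIntervalRep_iff_of_mem_iff {V W : Type*} (G : SimpleGraph V)
    (f : V → Finset (ℝ × ℝ)) (I : W → ℝ × ℝ) (φ : W → V)
    (hf : ∀ v p, p ∈ f v ↔ ∃ w, φ w = v ∧ I w = p) :
    IsMultiIntervalRep G f ↔
      Function.Surjective φ ∧ (∀ w, (I w).1 ≤ (I w).2) ∧
        ∀ u v, G.Adj u v ↔
          u ≠ v ∧ ∃ a b, φ a = u ∧ φ b = v ∧ (intervalIntersectionGraph I).Adj a b := by
  have hne (v : V) : (f v).Nonempty ↔ ∃ w, φ w = v := by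
    simp only [Finset.Nonempty, hf]
    exact ⟨fun ⟨_, w, hw, _⟩ => ⟨w, hw⟩, fun ⟨w, hw⟩ => ⟨_, w, hw, rfl⟩⟩
  have hle : (∀ v, ∀ p ∈ f v, p.1 ≤ p.2) ↔ ∀ w, (I w).1 ≤ (I w).2 := by
    simp only [hf]
    exact ⟨fun h w => h _ _ ⟨w, rfl, rfl⟩, fun h _ _ ⟨w, _, hw⟩ => hw ▸ h w⟩
  have hmeet (u v : V) (huv : u ≠ v) :
      (∃ p ∈ f u, ∃ q ∈ f v, (Set.Icc p.1 p.2 ∩ Set.Icc q.1 q.2).Nonempty) ↔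
        ∃ a b, φ a = u ∧ φ b = v ∧ (intervalIntersectionGraph I).Adj a b := by
    simp only [hf, intervalIntersectionGraph_adj]
    constructor
    · rintro ⟨_, ⟨a, rfl, rfl⟩, _, ⟨b, rfl, rfl⟩, hab⟩
      exact ⟨a, b, rfl, rfl, fun h => huv (congrArg φ h), hab⟩
    · rintro ⟨a, b, rfl, rfl, -, hab⟩
      exact ⟨_, ⟨a, rfl, rfl⟩, _, ⟨b, rfl, rfl⟩, hab⟩
  unfold IsMultiIntervalRep Function.Surjective
  simp only [hne, hle]
  refine and_congr_right fun _ => and_congr_right fun _ => forall₂_congr fun u v => ?_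
  by_cases huv : u = v
  · subst huv
    simp
  · simp only [ne_eq, huv, not_false_eq_true, true_and, forall_const, hmeet u v huv]

theorem sum_card_image_filter_le_card {V W α : Type*} [Fintype V] [Fintype W] [DecidableEq V]
    [DecidableEq α] (φ : W → V) (I : W → α) :
    ∑ v, ((univ.filter fun w => φ w = v).image I).card ≤ Fintype.card W :=
  calc ∑ v, ((univ.filter fun w => φ w = v).image I).card
      ≤ ∑ v, (univ.filter fun w => φ w = v).card := sum_le_sum fun _ _ => card_image_le
    _ = Fintype.card W := (card_eq_sum_card_fiberwise fun w _ => mem_univ (φ w)).symm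

/-- A graph is a k-gap interval graph (it has a multiple interval representation with at
most n+k intervals) iff it is obtained from an interval graph by a sequence of at most k
identifications of pairs of vertices, i.e. iff it is the image of an interval graph `H`
on at most n+k vertices under a surjection `φ` (adjacency being the pushforward of
adjacency in `H` between distinct images). -/
theorem stmt5 {V : Type*} [Fintype V] (G : SimpleGraph V) (k : ℕ) :
    (∃ f : V → Finset (ℝ × ℝ), IsMultiIntervalRep G f ∧
        ∑ v : V, (f v).card ≤ Fintype.card V + k) ↔
    (∃ (W : Type) (_ : Fintype W) (H : SimpleGraph W) (φ : W → V),
        IsIntervalGraph H ∧ Function.Surjective φ ∧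
        Fintype.card W ≤ Fintype.card V + k ∧
        ∀ u v : V, G.Adj u v ↔ (u ≠ v ∧ ∃ a b : W, φ a = u ∧ φ b = v ∧ H.Adj a b)) := by
  classical
  constructor
  · rintro ⟨f, hrep, hcard⟩
    -- the intervals are indexed through `Fin n` so that their type lives in `Type`
    let e := Fintype.equivFin V
    let φ : (Σ i : Fin (Fintype.card V), f (e.symm i)) → V := fun a => e.symm a.1
    let I : (Σ i : Fin (Fintype.card V), f (e.symm i)) → ℝ × ℝ := fun a => a.2
    have hf (v : V) (p : ℝ × ℝ) : p ∈ f v ↔ ∃ a, φ a = v ∧ I a = p :=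
      ⟨fun hp => ⟨⟨e v, p, by simpa using hp⟩, by simp [φ], rfl⟩,
        fun ⟨a, hav, hap⟩ => hav ▸ hap ▸ a.2.2⟩
    obtain ⟨hφ, hI, hG⟩ := (isMultiIntervalRep_iff_of_mem_iff G f I φ hf).1 hrep
    refine ⟨_, inferInstance, intervalIntersectionGraph I, φ,
      (isIntervalGraph_iff_exists_eq_intervalIntersectionGraph _).2 ⟨I, hI, rfl⟩, hφ, ?_, hG⟩
    simpa [Fintype.card_sigma, Fintype.card_coe, e.symm.sum_comp (fun v => (f v).card)]
      using hcard
  · rintro ⟨W, _, H, φ, hH, hφ, hcard, hG⟩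
    obtain ⟨I, hI, rfl⟩ := (isIntervalGraph_iff_exists_eq_intervalIntersectionGraph H).1 hH
    refine ⟨fun v => (univ.filter fun w => φ w = v).image I,
      (isMultiIntervalRep_iff_of_mem_iff G _ I φ (by simp)).2 ⟨hφ, hI, hG⟩,
      (sum_card_image_filter_le_card φ I).trans hcard⟩
end

section
/- Every interval graph G has a path decomposition whose set of bags is exactly the set of maximal cliques of G; in particular, every bag of this path decomposition is a clique of G. -/
/-- `B : Fin r → Set V` is a path decomposition of `G`. -/
def IsPathDecomp {V : Type*} (G : SimpleGraph V) {r : ℕ} (B : Fin r → Set V) : Prop :=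
  (∀ v : V, ∃ i, v ∈ B i) ∧
  (∀ u v : V, G.Adj u v → ∃ i, u ∈ B i ∧ v ∈ B i) ∧
  (∀ (v : V) (i j l : Fin r), i ≤ j → j ≤ l → v ∈ B i → v ∈ B l → v ∈ B j)

theorem Set.Finite.exists_forall_mem_Icc {ι α : Type*} [LinearOrder α] [Nonempty α] {s : Set ι}
    (hs : s.Finite) {l r : ι → α} (h : ∀ i ∈ s, ∀ j ∈ s, l i ≤ r j) :
    ∃ x, ∀ i ∈ s, x ∈ Set.Icc (l i) (r i) := by
  rcases s.eq_empty_or_nonempty with rfl | hne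
  · exact ⟨Classical.arbitrary α, by simp⟩
  obtain ⟨i, hi, hmax⟩ := Set.exists_max_image s l hs hne
  exact ⟨l i, fun j hj => ⟨hmax j hj, h i hi j hj⟩⟩

theorem SimpleGraph.exists_bag_superset_of_isClique {V : Type*} [Finite V] {G : SimpleGraph V}
    {r : ℕ} {B : Fin r → Set V} (hB : {S | Maximal G.IsClique S} ⊆ Set.range B) {C : Set V}
    (hC : G.IsClique C) : ∃ i, C ⊆ B i := by
  obtain ⟨M, hCM, hM⟩ := Finite.exists_le_maximal hC
  obtain ⟨i, rfl⟩ := hB hM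
  exact ⟨i, hCM⟩

theorem SimpleGraph.isPathDecomp_of_maximal_subset_range {V : Type*} [Finite V]
    {G : SimpleGraph V} {r : ℕ} {B : Fin r → Set V}
    (hB : {S | Maximal G.IsClique S} ⊆ Set.range B)
    (hconvex : ∀ (v : V) (i j k : Fin r), i ≤ j → j ≤ k → v ∈ B i → v ∈ B k → v ∈ B j) :
    IsPathDecomp G B := by
  refine ⟨fun v => ?_, fun u v huv => ?_, hconvex⟩
  · obtain ⟨i, hi⟩ := exists_bag_superset_of_isClique hB (G.isClique_singleton v)
    exact ⟨i, hi rfl⟩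
  · obtain ⟨i, hi⟩ := exists_bag_superset_of_isClique hB (isClique_pair.mpr fun _ => huv)
    exact ⟨i, hi (by simp), hi (by simp)⟩

section IntervalModel

variable {V : Type*}

def IsIntervalModel (G : SimpleGraph V) (l r : V → ℝ) : Prop :=
  (∀ v, l v ≤ r v) ∧
    ∀ u v, u ≠ v → (G.Adj u v ↔ (Set.Icc (l u) (r u) ∩ Set.Icc (l v) (r v)).Nonempty)

def intervalsContaining (l r : V → ℝ) (x : ℝ) : Set V := {v | x ∈ Set.Icc (l v) (r v)}

theorem mem_intervalsContaining_of_le_of_le {l r : V → ℝ} {v : V} {x y z : ℝ} (hxy : x ≤ y)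
    (hyz : y ≤ z) (hx : v ∈ intervalsContaining l r x) (hz : v ∈ intervalsContaining l r z) :
    v ∈ intervalsContaining l r y :=
  Set.Icc_subset_Icc hx.1 hz.2 ⟨hxy, hyz⟩

variable {G : SimpleGraph V} {l r : V → ℝ}

theorem IsIntervalModel.isClique_intervalsContaining (hG : IsIntervalModel G l r) (x : ℝ) :
    G.IsClique (intervalsContaining l r x) :=
  fun u hu v hv huv => (hG.2 u v huv).mpr ⟨x, hu, hv⟩

theorem IsIntervalModel.exists_intervalsContaining_eq [Finite V] (hG : IsIntervalModel G l r)
    {C : Set V} (hC : Maximal G.IsClique C) : ∃ x, intervalsContaining l r x = C := by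
  have hpairwise : ∀ u ∈ C, ∀ v ∈ C, l u ≤ r v := by
    intro u hu v hv
    obtain rfl | huv := eq_or_ne u v
    · exact hG.1 u
    obtain ⟨y, hyu, hyv⟩ := (hG.2 u v huv).mp (hC.1 hu hv huv)
    exact hyu.1.trans hyv.2
  obtain ⟨x, hx⟩ := C.toFinite.exists_forall_mem_Icc hpairwise
  exact ⟨x, (hC.eq_of_subset (hG.isClique_intervalsContaining x) hx).symm⟩

theorem IsIntervalModel.exists_finset_image_intervalsContaining_eq [Finite V]
    (hG : IsIntervalModel G l r) :
    ∃ T : Finset ℝ, intervalsContaining l r '' T = {S | Maximal G.IsClique S} := by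
  choose! x hx using fun C (hC : Maximal G.IsClique C) => hG.exists_intervalsContaining_eq hC
  obtain ⟨T, hT⟩ := ((Set.toFinite {S : Set V | Maximal G.IsClique S}).image x).exists_finset_coe
  refine ⟨T, ?_⟩
  rw [hT, Set.image_image]
  exact (Set.image_congr hx).trans (Set.image_id _)

end IntervalModel

/-- Every interval graph has a path decomposition whose set of bags is exactly the set of
maximal cliques; in particular every bag is a clique. -/
theorem stmt10 {V : Type*} [Fintype V] (G : SimpleGraph V) (h : IsIntervalGraph G) :
    ∃ (r : ℕ) (B : Fin r → Set V), IsPathDecomp G B ∧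
      Set.range B = {S : Set V | Maximal G.IsClique S} ∧
      ∀ i, G.IsClique (B i) := by
  obtain ⟨l, r, hG⟩ := h
  obtain ⟨T, hT⟩ := IsIntervalModel.exists_finset_image_intervalsContaining_eq hG
  let x := T.orderEmbOfFin rfl
  have hrange : Set.range (intervalsContaining l r ∘ x) = {S | Maximal G.IsClique S} := by
    rw [Set.range_comp, T.range_orderEmbOfFin rfl, hT]
  refine ⟨T.card, intervalsContaining l r ∘ x, ?_, hrange, fun i => ?_⟩
  · refine G.isPathDecomp_of_maximal_subset_range hrange.ge fun v i j k hij hjk => ?_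
    exact mem_intervalsContaining_of_le_of_le (x.monotone hij) (x.monotone hjk)
  · exact (show Maximal G.IsClique _ from hrange.le ⟨i, rfl⟩).1
end

section
/- Let G = (V,E) be a graph, X ⊆ V an independent-deletion-style set, and consider the maximum independent set problem. Then the maximum size of an independent set of G equals the maximum over independent subsets Y of X of (|Y| + α(G − (X ∪ N[Y]))), where α denotes the independence number. -/
/-! Splitting a maximum independent set `S` as `(S ∩ X) ∪ (S \ X)`: the part outside `X`
avoids `N[S ∩ X]`, so it is independent in `G - (X ∪ N[S ∩ X])`. Conversely, any independent
`Y` together with an independent set of `G - N[Y]` is independent in `G`. Hence `α(G)` is an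
upper bound of the candidate values and is attained at `Y = S ∩ X`. -/

def IsIndepSet {V : Type*} (G : SimpleGraph V) (S : Set V) : Prop :=
  S.Pairwise fun u v => ¬ G.Adj u v

def closedNbhd {V : Type*} (G : SimpleGraph V) (Y : Set V) : Set V :=
  Y ∪ {w | ∃ v ∈ Y, G.Adj v w}

/-- Independence number of `G`. -/
noncomputable def indepNum {V : Type*} (G : SimpleGraph V) : ℕ :=
  sSup {n | ∃ S : Set V, IsIndepSet G S ∧ S.ncard = n}

section IndependentSets

variable {V : Type*} {G : SimpleGraph V}

lemma isIndepSet_induce_iff {C : Set V} {T : Set C} :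
    IsIndepSet (G.induce C) T ↔ IsIndepSet G (Subtype.val '' T) :=
  (Subtype.val_injective.injOn.pairwise_image (r := fun u v => ¬ G.Adj u v)).symm

lemma IsIndepSet.union {A B : Set V} (hA : IsIndepSet G A) (hB : IsIndepSet G B)
    (hAB : ∀ a ∈ A, ∀ b ∈ B, ¬ G.Adj a b) : IsIndepSet G (A ∪ B) :=
  Set.pairwise_union.mpr ⟨hA, hB, fun a ha b hb _ =>
    ⟨hAB a ha b hb, fun hba => hAB a ha b hb hba.symm⟩⟩

lemma IsIndepSet.inter_closedNbhd {S Y : Set V} (hS : IsIndepSet G S) (hYS : Y ⊆ S) :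
    S ∩ closedNbhd G Y = Y := by
  ext s
  refine ⟨?_, fun hs => ⟨hYS hs, Or.inl hs⟩⟩
  rintro ⟨hs, hy | ⟨y, hy, hadj⟩⟩
  · exact hy
  · exact absurd hadj (hS (hYS hy) hs (G.ne_of_adj hadj))

lemma bddAbove_ncard_isIndepSet [Finite V] (G : SimpleGraph V) :
    BddAbove {n | ∃ S : Set V, IsIndepSet G S ∧ S.ncard = n} :=
  ⟨Nat.card V, by rintro n ⟨S, -, rfl⟩; exact Set.ncard_le_card S⟩

lemma IsIndepSet.ncard_le_indepNum [Finite V] {S : Set V} (hS : IsIndepSet G S) :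
    S.ncard ≤ indepNum G :=
  le_csSup (bddAbove_ncard_isIndepSet G) ⟨S, hS, rfl⟩

lemma exists_isIndepSet_ncard_eq_indepNum [Finite V] (G : SimpleGraph V) :
    ∃ S : Set V, IsIndepSet G S ∧ S.ncard = indepNum G :=
  Nat.sSup_mem (s := {n | ∃ S : Set V, IsIndepSet G S ∧ S.ncard = n})
    ⟨0, ∅, Set.pairwise_empty _, Set.ncard_empty V⟩ (bddAbove_ncard_isIndepSet G)

lemma ncard_add_indepNum_induce_le [Finite V] {Y C : Set V} (hY : IsIndepSet G Y)
    (hC : Disjoint C (closedNbhd G Y)) : Y.ncard + indepNum (G.induce C) ≤ indepNum G := by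
  obtain ⟨T, hT, hTcard⟩ := exists_isIndepSet_ncard_eq_indepNum (G.induce C)
  have hTC : Subtype.val '' T ⊆ C := by
    rintro _ ⟨t, -, rfl⟩
    exact t.2
  have hdisj : Disjoint Y (Subtype.val '' T) :=
    ((hC.mono_left hTC).mono_right Set.subset_union_left).symm
  have hindep : IsIndepSet G (Y ∪ Subtype.val '' T) :=
    hY.union (isIndepSet_induce_iff.mp hT) fun y hy c hc hadj =>
      Set.disjoint_left.mp hC (hTC hc) (Or.inr ⟨y, hy, hadj⟩)
  calc Y.ncard + indepNum (G.induce C) = (Y ∪ Subtype.val '' T).ncard := by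
        rw [Set.ncard_union_eq hdisj, Set.ncard_image_of_injective _ Subtype.val_injective,
          hTcard]
    _ ≤ indepNum G := hindep.ncard_le_indepNum

lemma IsIndepSet.ncard_le_ncard_inter_add_indepNum [Finite V] {S : Set V}
    (hS : IsIndepSet G S) (X : Set V) :
    S.ncard ≤ (S ∩ X).ncard + indepNum (G.induce (X ∪ closedNbhd G (S ∩ X))ᶜ) := by
  set C := (X ∪ closedNbhd G (S ∩ X))ᶜ
  have hsub : S ⊆ (S ∩ X) ∪ Subtype.val '' (Subtype.val ⁻¹' S : Set C) := by
    intro s hs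
    by_cases hsX : s ∈ X
    · exact Or.inl ⟨hs, hsX⟩
    · refine Or.inr ⟨⟨s, ?_⟩, hs, rfl⟩
      rintro (h | h)
      · exact hsX h
      · exact hsX ((hS.inter_closedNbhd Set.inter_subset_left).subset ⟨hs, h⟩).2
  have hT : IsIndepSet (G.induce C) (Subtype.val ⁻¹' S) :=
    isIndepSet_induce_iff.mpr (hS.mono (Set.image_preimage_subset _ _))
  calc S.ncard ≤ (S ∩ X).ncard + (Subtype.val '' (Subtype.val ⁻¹' S : Set C)).ncard :=
        (Set.ncard_le_ncard hsub).trans (Set.ncard_union_le _ _)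
    _ ≤ (S ∩ X).ncard + indepNum (G.induce C) := by
        rw [Set.ncard_image_of_injective _ Subtype.val_injective]
        exact Nat.add_le_add_left hT.ncard_le_indepNum _

end IndependentSets

/-- The independence number of `G` equals the maximum over independent subsets `Y` of `X`
of `|Y| + α(G - (X ∪ N[Y]))`. -/
theorem stmt14 {V : Type*} [Fintype V] (G : SimpleGraph V) (X : Set V) :
    indepNum G = sSup {m | ∃ Y ⊆ X, IsIndepSet G Y ∧
      m = Y.ncard + indepNum (G.induce (X ∪ closedNbhd G Y)ᶜ)} := by
  have hdisj (Y : Set V) : Disjoint (X ∪ closedNbhd G Y)ᶜ (closedNbhd G Y) :=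
    disjoint_compl_left.mono_right Set.subset_union_right
  obtain ⟨S, hS, hScard⟩ := exists_isIndepSet_ncard_eq_indepNum G
  have hSX : IsIndepSet G (S ∩ X) := hS.mono Set.inter_subset_left
  refine (IsGreatest.csSup_eq ⟨?_, ?_⟩).symm
  · refine ⟨S ∩ X, Set.inter_subset_right, hSX, ?_⟩
    exact le_antisymm (hScard ▸ hS.ncard_le_ncard_inter_add_indepNum X)
        (ncard_add_indepNum_induce_le hSX (hdisj _))
  · rintro m ⟨Y, -, hY, rfl⟩
    exact ncard_add_indepNum_induce_le hY (hdisj Y)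
end
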